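/- arXiv:1411.3514 — 2 statements merged into one kernel-verified Lean document; each statement's English description precedes it below -/
import Mathlib

section
/- Let s : ℕ → ℕ be a strictly increasing sequence of positive integers. Define inductively n₁ = 1 and n_{i+1} = 2^{σ_i} + n_i, where for each i, w_i is defined as follows: w_{n_j} is the maximum of a designated block of 2^{n_j} consecutive terms of s (the first block of length 2^{n_1}, then the next of length 2^{n_2}, etc.), w_i = 0 for i not of the form n_j, and σ_i = w_1 + ⋯ + w_i. Then the series ∑_{i=1}^∞ 1/2^{σ_i} diverges. -/
/-!
All labels at depths strictly between `n j` and `n (j+1)` vanish, so `σ` is constant, equal to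
`σ (n j)`, on the block `[n j, n (j+1))`. That block has exactly `2 ^ σ (n j)` indices, so it
contributes exactly `1` to `∑ 1 / 2 ^ σ i`, and the partial sum up to depth `n J` is `J`.
-/

noncomputable section

/-- The initial segment of length `n` of the ray `r` in the infinite binary tree,
viewed as a vertex (finite binary string). -/
def rayInit (r : ℕ → Bool) (n : ℕ) : List Bool := List.ofFn fun i : Fin n => r i

/-- The set of vertices of the binary tree at depth `i`. -/
def depthNodes (i : ℕ) : Finset (List Bool) :=
  Finset.image (fun f : Fin i → Bool => List.ofFn f) Finset.univ

/-- `w_i`: the maximum of the Whitehead labels at tree depth `i`. -/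
def maxw (w : List Bool → ℕ) (i : ℕ) : ℕ := (depthNodes i).sup w

/-- `σ_i = w_1 + w_2 + ⋯ + w_i`. -/
def sigma41 (w : List Bool → ℕ) (i : ℕ) : ℕ := ∑ k ∈ Finset.range i, maxw w (k + 1)

/-- The labeling of the binary tree from Construction 4.1 applied to the sequence `s`:
there is a sequence of depths `n₁ = 1`, `n_{j+1} = 2^{σ_{n_j}} + n_j`; all labels at depths
not of the form `n_j` are `0`, and the labels at depth `n_j` are exactly the `j`-th block
(of length `2^{n_j}`) of consecutive terms of `s`, assigned bijectively to the nodes. -/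
def IsConstruction41 (s : ℕ → ℕ) (w : List Bool → ℕ) : Prop :=
  ∃ n : ℕ → ℕ, n 0 = 1 ∧ (∀ j, n (j + 1) = 2 ^ sigma41 w (n j) + n j) ∧
    (∀ v : List Bool, (∀ j, v.length ≠ n j) → w v = 0) ∧
    ∀ j, ∃ β : {v : List Bool // v.length = n j} ≃ Fin (2 ^ n j),
      ∀ v : {v : List Bool // v.length = n j},
        w v.val = s ((∑ l ∈ Finset.range j, 2 ^ n l) + (β v : ℕ))

open Finset Filter

section Blocks

variable {σ n : ℕ → ℕ}

lemma sum_Ico_one_div_two_pow_block_eq_one (hrec : ∀ j, n (j + 1) = 2 ^ σ (n j) + n j)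
    (hconst : ∀ j i, n j ≤ i → i < n (j + 1) → σ i = σ (n j)) (j : ℕ) :
    ∑ i ∈ Ico (n j) (n (j + 1)), (1 : ℝ) / 2 ^ σ i = 1 := by
  have hterm : ∀ i ∈ Ico (n j) (n (j + 1)), (1 : ℝ) / 2 ^ σ i = 1 / 2 ^ σ (n j) := by
    intro i hi
    rw [hconst j i (mem_Ico.1 hi).1 (mem_Ico.1 hi).2]
  rw [sum_congr rfl hterm, sum_const, Nat.card_Ico, hrec j, Nat.add_sub_cancel, nsmul_eq_mul]
  push_cast
  field_simp

lemma sum_Ico_one_div_two_pow_blocks_eq (hrec : ∀ j, n (j + 1) = 2 ^ σ (n j) + n j)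
    (hconst : ∀ j i, n j ≤ i → i < n (j + 1) → σ i = σ (n j)) (J : ℕ) :
    ∑ i ∈ Ico (n 0) (n J), (1 : ℝ) / 2 ^ σ i = J := by
  have hmono : Monotone n := monotone_nat_of_le_succ fun j => (hrec j).symm ▸ Nat.le_add_left _ _
  induction J with
  | zero => simp
  | succ J ih =>
    rw [← sum_Ico_consecutive _ (hmono J.zero_le) (hmono J.le_succ), ih,
      sum_Ico_one_div_two_pow_block_eq_one hrec hconst, Nat.cast_succ]

lemma tendsto_sum_Ico_one_div_two_pow_atTop (hrec : ∀ j, n (j + 1) = 2 ^ σ (n j) + n j)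
    (hconst : ∀ j i, n j ≤ i → i < n (j + 1) → σ i = σ (n j)) :
    Tendsto (fun N => ∑ i ∈ Ico (n 0) N, (1 : ℝ) / 2 ^ σ i) atTop atTop := by
  refine tendsto_atTop_atTop_of_monotone
    (fun N M hNM => sum_le_sum_of_subset_of_nonneg (Ico_subset_Ico_right hNM)
      fun _ _ _ => by positivity) fun b => ?_
  obtain ⟨J, hJ⟩ := exists_nat_ge b
  exact ⟨n J, (sum_Ico_one_div_two_pow_blocks_eq hrec hconst J).symm ▸ hJ⟩

end Blocks

lemma maxw_eq_zero {w : List Bool → ℕ} {d : ℕ} (h : ∀ v : List Bool, v.length = d → w v = 0) :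
    maxw w d = 0 := by
  refine Finset.sup_eq_bot_iff _ _ |>.2 fun v hv => ?_
  obtain ⟨f, -, rfl⟩ := mem_image.1 hv
  exact h _ List.length_ofFn

lemma sigma41_eq_of_maxw_eq_zero {w : List Bool → ℕ} {a b i : ℕ}
    (h : ∀ d, a < d → d < b → maxw w d = 0) (hai : a ≤ i) (hib : i < b) :
    sigma41 w i = sigma41 w a := by
  unfold sigma41
  rw [← sum_range_add_sum_Ico _ hai, sum_eq_zero (s := Ico a i) fun k hk => ?_, add_zero]
  rw [mem_Ico] at hk
  exact h _ (by omega) (by omega)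

lemma sigma41_eq_of_mem_block {w : List Bool → ℕ} {n : ℕ → ℕ}
    (hrec : ∀ j, n (j + 1) = 2 ^ sigma41 w (n j) + n j)
    (hzero : ∀ v : List Bool, (∀ j, v.length ≠ n j) → w v = 0) (j i : ℕ)
    (hji : n j ≤ i) (hij : i < n (j + 1)) :
    sigma41 w i = sigma41 w (n j) := by
  have hmono : StrictMono n :=
    strictMono_nat_of_lt_succ fun j => (hrec j).symm ▸ Nat.lt_add_of_pos_left (by positivity)
  refine sigma41_eq_of_maxw_eq_zero (fun d hjd hdj => maxw_eq_zero fun v hv => hzero v ?_) hji hij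
  intro k hk
  rcases le_or_gt k j with hkj | hjk
  · exact (hmono.monotone hkj).not_gt (hk ▸ hv ▸ hjd)
  · exact (hmono.monotone hjk).not_gt (hk ▸ hv ▸ hdj)

theorem construction41_series_diverges_general (s : ℕ → ℕ)
    (w : List Bool → ℕ) (hw : IsConstruction41 s w) :
    Filter.Tendsto (fun N => ∑ i ∈ Finset.range N, (1 : ℝ) / 2 ^ sigma41 w (i + 1))
      Filter.atTop Filter.atTop := by
  obtain ⟨n, hn0, hrec, hzero, -⟩ := hw
  have hIco := tendsto_sum_Ico_one_div_two_pow_atTop hrec (sigma41_eq_of_mem_block hrec hzero)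
  rw [hn0] at hIco
  refine (hIco.comp (tendsto_add_atTop_nat 1)).congr fun N => ?_
  simp only [Function.comp_apply, range_eq_Ico]
  exact (sum_Ico_add' _ 0 N 1).symm

/-- For the labeling of Construction 4.1 associated with a strictly increasing sequence
`s` of positive integers, the series `∑_{i=1}^∞ 1/2^{σ_i}` diverges. -/
theorem construction41_series_diverges (s : ℕ → ℕ) (hs : StrictMono s)
    (hpos : ∀ i, 0 < s i) (w : List Bool → ℕ) (hw : IsConstruction41 s w) :
    Filter.Tendsto (fun N => ∑ i ∈ Finset.range N, (1 : ℝ) / 2 ^ sigma41 w (i + 1))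
      Filter.atTop Filter.atTop :=
  construction41_series_diverges_general s w hw
end
end

section
/- In Construction 4.1, if x and y are distinct points of the Cantor set C(s), then their Whitehead sequences s(x) and s(y) do not have the same tail: for all n, m there exists k with s(x)_{n+k} ≠ s(y)_{m+k}. -/
noncomputable section

theorem length_rayInit (r : ℕ → Bool) (n : ℕ) : (rayInit r n).length = n := by
  simp [rayInit]

theorem rayInit_ne_of_lt {r r' : ℕ → Bool} {i N : ℕ} (hi : r i ≠ r' i) (hiN : i < N) (M : ℕ) :
    rayInit r N ≠ rayInit r' M := by
  intro h
  obtain rfl : N = M := by simpa only [length_rayInit] using congrArg List.length h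
  exact hi (congrFun (List.ofFn_inj.mp h) ⟨i, hiN⟩)

/-- The combinatorial heart of Construction 4.1: if the nonzero labels on the binary
tree are pairwise distinct and every ray carries infinitely many nonzero labels, then
the label sequences along two distinct rays do not have the same tail. -/
theorem distinct_rays_no_common_tail (w : List Bool → ℕ)
    (hinj : ∀ u v : List Bool, w u ≠ 0 → w v ≠ 0 → w u = w v → u = v)
    (hinf : ∀ r : ℕ → Bool, {n : ℕ | w (rayInit r n) ≠ 0}.Infinite)
    (r r' : ℕ → Bool) (hrr : r ≠ r') :
    ∀ n m : ℕ, ∃ k : ℕ, w (rayInit r (n + k)) ≠ w (rayInit r' (m + k)) := by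
  intro n m
  by_contra! h
  obtain ⟨i, hi⟩ := Function.ne_iff.mp hrr
  obtain ⟨N, hwN, hN⟩ := (hinf r).exists_gt (max n i)
  obtain ⟨k, rfl⟩ : ∃ k, N = n + k := ⟨N - n, by omega⟩
  -- equal nonzero labels force equal vertices, but depth `n + k` lies past the branching point `i`
  exact rayInit_ne_of_lt hi (by omega) _ (hinj _ _ hwN (h k ▸ hwN) (h k))
end
end
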